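/- Let K be an algebraically closed field of characteristic zero. For all a, b ≥ 2 with gcd(a,b) = 1, the polynomial x^a + y^b + 1 is irreducible in K[x,y]. -/
import Mathlib

open Polynomial

lemma aux_pow_ne (K : Type*) [Field K] (a b : ℕ) (hb : 1 ≤ b)
    (hab : Nat.gcd a b = 1) (p : ℕ) (hp : p.Prime) (hpa : p ∣ a)
    (f : FractionRing (Polynomial K)) :
    f ^ p ≠ algebraMap (Polynomial K) (FractionRing (Polynomial K)) (-(X ^ b + 1)) := by
  intro hf
  have hint : IsIntegral (Polynomial K) f := by
    refine ⟨X ^ p - C (-(X ^ b + 1)), monic_X_pow_sub_C _ hp.ne_zero, ?_⟩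
    simp [hf]
  obtain ⟨g, hg⟩ := IsIntegrallyClosed.isIntegral_iff.mp hint
  have hinj := IsFractionRing.injective (Polynomial K) (FractionRing (Polynomial K))
  have hgp : g ^ p = -(X ^ b + 1) := by
    apply hinj
    rw [map_pow, hg, hf]
  have hdegc : (X ^ b + 1 : Polynomial K).natDegree = b :=
    natDegree_X_pow_add_C (n := b) (r := (1 : K))
  have hg0 : g ≠ 0 := by
    intro h
    rw [h, zero_pow hp.ne_zero] at hgp
    have h3 : (X ^ b + 1 : Polynomial K) = 0 := neg_eq_zero.mp hgp.symm
    have := congrArg (fun q : Polynomial K => q.coeff 0) h3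
    simp [coeff_X_pow, show ¬ (0 = b) by omega] at this
  have hdeg : p * g.natDegree = b := by
    have := congrArg natDegree hgp
    rwa [natDegree_pow, natDegree_neg, hdegc] at this
  have hpb : p ∣ b := ⟨g.natDegree, hdeg.symm⟩
  have : p ∣ Nat.gcd a b := Nat.dvd_gcd hpa hpb
  rw [hab] at this
  exact hp.one_lt.ne' (Nat.dvd_one.mp this)

lemma aux_irred_poly (K : Type*) [Field K] (a b : ℕ) (haodd : Odd a) (hb : 1 ≤ b)
    (hab : Nat.gcd a b = 1) :
    Irreducible (X ^ a + C (X ^ b + 1) : Polynomial (Polynomial K)) := by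
  have ha0 : a ≠ 0 := by rintro rfl; simp at haodd
  rw [show (X ^ a + C (X ^ b + 1) : Polynomial (Polynomial K)) =
      X ^ a - C (-(X ^ b + 1)) by rw [map_neg, sub_neg_eq_add]]
  have hmonic := monic_X_pow_sub_C (R := Polynomial K) (-(X ^ b + 1)) ha0
  rw [hmonic.irreducible_iff_irreducible_map_fraction_map (K := FractionRing (Polynomial K))]
  rw [Polynomial.map_sub, Polynomial.map_pow, Polynomial.map_X, Polynomial.map_C]
  exact X_pow_sub_C_irreducible_of_odd haodd
    (fun p hp hpa f => aux_pow_ne K a b hb hab p hp hpa f)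

lemma aux_mv (K : Type*) [Field K] (a b : ℕ) (haodd : Odd a) (hb : 1 ≤ b)
    (hab : Nat.gcd a b = 1) :
    Irreducible ((MvPolynomial.X 0) ^ a + (MvPolynomial.X 1) ^ b + 1 :
      MvPolynomial (Fin 2) K) := by
  let inner : MvPolynomial (Fin 1) K ≃ₐ[K] Polynomial K :=
    (MvPolynomial.renameEquiv K ((Equiv.equivPUnit (Fin 1)) : Fin 1 ≃ PUnit.{1})).trans (MvPolynomial.pUnitAlgEquiv K)
  let e : MvPolynomial (Fin 2) K ≃ₐ[K] Polynomial (Polynomial K) :=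
    (MvPolynomial.finSuccEquiv K 1).trans (Polynomial.mapAlgEquiv inner)
  have hinner : inner (MvPolynomial.X 0) = X := by
    simp [inner, MvPolynomial.pUnitAlgEquiv]
  have he0 : e (MvPolynomial.X 0) = X := by
    simp [e, MvPolynomial.finSuccEquiv_X_zero, Polynomial.mapAlgEquiv]
  have he1 : e (MvPolynomial.X 1) = C X := by
    have h1 : (1 : Fin 2) = Fin.succ 0 := rfl
    show Polynomial.map (↑(inner : MvPolynomial (Fin 1) K ≃ₐ[K] Polynomial K) :
        MvPolynomial (Fin 1) K →+* Polynomial K)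
        ((MvPolynomial.finSuccEquiv K 1) (MvPolynomial.X 1)) = C X
    rw [h1, MvPolynomial.finSuccEquiv_X_succ, Polynomial.map_C]
    exact congrArg C hinner
  have key : e ((MvPolynomial.X 0) ^ a + (MvPolynomial.X 1) ^ b + 1) =
      X ^ a + C (X ^ b + 1) := by
    have hC : (C (X ^ b + 1) : Polynomial (Polynomial K)) = C X ^ b + 1 := by
      rw [map_add, map_one, map_pow]
    rw [hC, map_add, map_add, map_pow, map_pow, he0, he1, map_one, add_assoc]
  have h2 : Irreducible (e ((MvPolynomial.X 0) ^ a + (MvPolynomial.X 1) ^ b + 1)) := by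
    rw [key]; exact aux_irred_poly K a b haodd hb hab
  exact (MulEquiv.irreducible_iff e.toMulEquiv).mp h2

theorem fermat_like_irreducible (K : Type*) [Field K] [IsAlgClosed K] [CharZero K]
    (a b : ℕ) (ha : 2 ≤ a) (hb : 2 ≤ b) (hab : Nat.gcd a b = 1) :
    Irreducible ((MvPolynomial.X 0) ^ a + (MvPolynomial.X 1) ^ b + 1 :
      MvPolynomial (Fin 2) K) := by
  rcases Nat.even_or_odd a with hae | hao
  · have hbo : Odd b := by
      rcases Nat.even_or_odd b with hbe | hbo
      · obtain ⟨m, hm⟩ := hae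
        obtain ⟨n, hn⟩ := hbe
        have : 2 ∣ Nat.gcd a b := Nat.dvd_gcd ⟨m, by omega⟩ ⟨n, by omega⟩
        rw [hab] at this
        omega
      · exact hbo
    have h := aux_mv K b a hbo (by omega) (Nat.gcd_comm a b ▸ hab)
    let s : MvPolynomial (Fin 2) K ≃ₐ[K] MvPolynomial (Fin 2) K :=
      MvPolynomial.renameEquiv K (Equiv.swap (0 : Fin 2) 1)
    have hs : s ((MvPolynomial.X 0) ^ b + (MvPolynomial.X 1) ^ a + 1) =
        (MvPolynomial.X 0) ^ a + (MvPolynomial.X 1) ^ b + 1 := by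
      simp [s, MvPolynomial.rename_X, Equiv.swap_apply_left, Equiv.swap_apply_right]
      ring
    have h2 : Irreducible (s.toMulEquiv ((MvPolynomial.X 0) ^ b + (MvPolynomial.X 1) ^ a + 1)) :=
      (MulEquiv.irreducible_iff s.toMulEquiv).mpr h
    rwa [show s.toMulEquiv ((MvPolynomial.X 0) ^ b + (MvPolynomial.X 1) ^ a + 1) =
        s ((MvPolynomial.X 0) ^ b + (MvPolynomial.X 1) ^ a + 1) from rfl, hs] at h2
  · exact aux_mv K a b hao (by omega) hab
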